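/- arXiv:2410.00411 — 4 statements merged into one kernel-verified Lean document; each statement's English description precedes it below -/
import Mathlib

section
/- For every real number β > 1 and every z ∈ ℂ with |z| < β, one has 1 − φ_β(z) = (1 − z)·ψ_β(z), where both series defining φ_β and ψ_β converge absolutely at z. -/
open scoped BigOperators

/-- The beta-map `x ↦ βx - ⌊βx⌋`. -/
noncomputable def tau (β x : ℝ) : ℝ := β * x - ⌊β * x⌋

/-- Greedy digit `a_n(β,x) = ⌊β·τ_β^{n-1}(x)⌋` (meaningful for `n ≥ 1`). -/
noncomputable def dig (β x : ℝ) (n : ℕ) : ℤ := ⌊β * (tau β)^[n - 1] x⌋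

/-- `x` is a simple point for `β`: some `τ_β^{n-1}(x)` lies in `{1/β, …, ⌊β⌋/β}`. -/
def IsSimplePt (β x : ℝ) : Prop :=
  ∃ n : ℕ, 1 ≤ n ∧ ∃ k : ℕ, 1 ≤ k ∧ (k : ℤ) ≤ ⌊β⌋ ∧ (tau β)^[n - 1] x = (k : ℝ) / β

/-- `L(x)`: the least `n ≥ 1` with `τ_β^{n-1}(x) ∈ {1/β, …, ⌊β⌋/β}`. -/
noncomputable def Lpt (β x : ℝ) : ℕ :=
  sInf {n : ℕ | 1 ≤ n ∧ ∃ k : ℕ, 1 ≤ k ∧ (k : ℤ) ≤ ⌊β⌋ ∧ (tau β)^[n - 1] x = (k : ℝ) / β}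

/-- `β` is simple if `x = 1` is a simple point for `β`. -/
def IsSimpleBeta (β : ℝ) : Prop := IsSimplePt β 1

open Classical in
/-- Quasi-greedy digit `d_n(β,1)` (meaningful for `n ≥ 1`): if `β` is simple with `L = L(1)`,
the periodic sequence repeating the block `(a_1, …, a_{L-1}, a_L - 1)`; otherwise `a_n(β,1)`. -/
noncomputable def qdig (β : ℝ) (n : ℕ) : ℤ :=
  if IsSimpleBeta β then
    (if (n - 1) % Lpt β 1 = Lpt β 1 - 1 then dig β 1 (Lpt β 1) - 1
     else dig β 1 ((n - 1) % Lpt β 1 + 1))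
  else dig β 1 n

/-- `φ_β(z) = Σ_{n≥1} a_n(β,1) β^{-n} z^n`. -/
noncomputable def phi (β : ℝ) (z : ℂ) : ℂ :=
  ∑' n : ℕ, (dig β 1 (n + 1) : ℂ) * (z / (β : ℂ)) ^ (n + 1)

/-- `φ̂_β(z) = Σ_{n≥1} d_n(β,1) β^{-n} z^n`. -/
noncomputable def phiHat (β : ℝ) (z : ℂ) : ℂ :=
  ∑' n : ℕ, (qdig β (n + 1) : ℂ) * (z / (β : ℂ)) ^ (n + 1)

/-- `ψ_β(z) = 1 + Σ_{n≥1} τ_β^n(1) β^{-n} z^n`. -/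
noncomputable def psi (β : ℝ) (z : ℂ) : ℂ :=
  1 + ∑' n : ℕ, (((tau β)^[n + 1] 1 : ℝ) : ℂ) * (z / (β : ℂ)) ^ (n + 1)

/-- `F_λ(x) = Σ_{n≥1} a_n(β,x)/(βλ)^n`. -/
noncomputable def Ffun (β : ℝ) (lam : ℂ) (x : ℝ) : ℂ :=
  ∑' n : ℕ, (dig β x (n + 1) : ℂ) / ((β : ℂ) * lam) ^ (n + 1)

/-!
With `t n = τ_β^n(1)` and `w = z / β`, the defining identity `⌊β y⌋ = β y - τ_β(y)` gives
`a_{n+1}(β,1) = β t n - t (n+1)`. Since `t n ∈ [0,1]` and `a_n ∈ [0,β]`, all series are dominated by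
the geometric series in `‖w‖ < 1`, and the digit series telescopes:
`Σ a_{n+1} w^{n+1} = z · Σ t n w^n - (Σ t n w^n - 1)`, i.e. `1 - φ_β(z) = (1 - z) ψ_β(z)`.
-/

open Set

lemma summable_norm_mul_pow_of_norm_le {R : Type*} [NormedRing R] [NormOneClass R]
    {c : ℕ → R} {C : ℝ} (hc : ∀ n, ‖c n‖ ≤ C) {w : R} (hw : ‖w‖ < 1) :
    Summable fun n ↦ ‖c n * w ^ n‖ :=
  .of_nonneg_of_le (fun _ ↦ norm_nonneg _)
    (fun n ↦ (norm_mul_le _ _).trans <|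
      mul_le_mul (hc n) (norm_pow_le _ _) (norm_nonneg _) ((norm_nonneg _).trans (hc 0)))
    ((summable_geometric_of_lt_one (norm_nonneg w) hw).mul_left C)

lemma tau_eq_fract (β x : ℝ) : tau β x = Int.fract (β * x) := rfl

lemma iterate_tau_mem_Icc {β x : ℝ} (hx : x ∈ Icc 0 1) (n : ℕ) :
    (tau β)^[n] x ∈ Icc (0 : ℝ) 1 := by
  cases n with
  | zero => exact hx
  | succ n =>
    rw [Function.iterate_succ_apply', tau_eq_fract]
    exact ⟨Int.fract_nonneg _, (Int.fract_lt_one _).le⟩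

lemma dig_succ_eq (β x : ℝ) (n : ℕ) :
    (dig β x (n + 1) : ℝ) = β * (tau β)^[n] x - (tau β)^[n + 1] x := by
  rw [Function.iterate_succ_apply', tau, dig, Nat.add_sub_cancel]
  ring

-- Also for `n = 0`, where the truncated `n - 1` makes `dig β x 0 = dig β x 1`.
lemma dig_mem_Icc {β x : ℝ} (hβ : 0 ≤ β) (hx : x ∈ Icc 0 1) (n : ℕ) :
    (dig β x n : ℝ) ∈ Icc 0 β := by
  obtain ⟨h0, h1⟩ := iterate_tau_mem_Icc (β := β) hx (n - 1)
  exact ⟨mod_cast Int.floor_nonneg.2 (mul_nonneg hβ h0),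
    (Int.floor_le _).trans (mul_le_of_le_one_right hβ h1)⟩

lemma norm_dig_le {β x : ℝ} (hβ : 0 ≤ β) (hx : x ∈ Icc 0 1) (n : ℕ) :
    ‖(dig β x n : ℂ)‖ ≤ β := by
  obtain ⟨h0, hle⟩ := dig_mem_Icc hβ hx n
  rwa [Complex.norm_intCast, abs_of_nonneg h0]

lemma norm_iterate_tau_le {β x : ℝ} (hx : x ∈ Icc 0 1) (n : ℕ) :
    ‖(((tau β)^[n] x : ℝ) : ℂ)‖ ≤ 1 := by
  obtain ⟨h0, h1⟩ := iterate_tau_mem_Icc (β := β) hx n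
  rwa [Complex.norm_real, Real.norm_of_nonneg h0]

lemma sub_tsum_dig_mul_pow {β x : ℝ} (hx : x ∈ Icc 0 1) {w : ℂ} (hw : ‖w‖ < 1) :
    x - ∑' n : ℕ, (dig β x (n + 1) : ℂ) * w ^ (n + 1) =
      (1 - β * w) * ∑' n : ℕ, (((tau β)^[n] x : ℝ) : ℂ) * w ^ n := by
  set t : ℕ → ℂ := fun n ↦ (((tau β)^[n] x : ℝ) : ℂ) * w ^ n
  have ht : Summable t :=
    (summable_norm_mul_pow_of_norm_le (norm_iterate_tau_le hx) hw).of_norm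
  have hterm (n : ℕ) : (dig β x (n + 1) : ℂ) * w ^ (n + 1) = β * w * t n - t (n + 1) := by
    have h := congrArg ((↑) : ℝ → ℂ) (dig_succ_eq β x n)
    push_cast at h
    simp only [t, h, pow_succ]
    ring
  have hshift : ∑' n, t (n + 1) = ∑' n, t n - x := by
    rw [ht.tsum_eq_zero_add]
    simp [t]
  rw [tsum_congr hterm, (ht.mul_left _).tsum_sub ((summable_nat_add_iff 1).2 ht), tsum_mul_left,
    hshift]
  ring

theorem stmt6 (β : ℝ) (hβ : 1 < β) (z : ℂ) (hz : ‖z‖ < β) :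
    Summable (fun n : ℕ => ‖(dig β 1 (n + 1) : ℂ) * (z / (β : ℂ)) ^ (n + 1)‖) ∧
    Summable (fun n : ℕ => ‖(((tau β)^[n + 1] 1 : ℝ) : ℂ) * (z / (β : ℂ)) ^ (n + 1)‖) ∧
    1 - phi β z = (1 - z) * psi β z := by
  have hβ0 : 0 < β := one_pos.trans hβ
  have h1 : (1 : ℝ) ∈ Icc 0 1 := right_mem_Icc.2 zero_le_one
  have hw : ‖z / β‖ < 1 := by
    rwa [norm_div, Complex.norm_real, Real.norm_of_nonneg hβ0.le, div_lt_one hβ0]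
  have hτ : Summable fun n : ℕ ↦ ‖(((tau β)^[n] 1 : ℝ) : ℂ) * (z / β) ^ n‖ :=
    summable_norm_mul_pow_of_norm_le (norm_iterate_tau_le h1) hw
  have hdig : Summable fun n : ℕ ↦ ‖(dig β 1 n : ℂ) * (z / β) ^ n‖ :=
    summable_norm_mul_pow_of_norm_le (norm_dig_le hβ0.le h1) hw
  -- Ascribed without the expected type: unifying `f (n + 1)` against it unfolds `dig` and `tau`.
  refine ⟨((summable_nat_add_iff 1).2 hdig :), ((summable_nat_add_iff 1).2 hτ :), ?_⟩
  have hψ : psi β z = ∑' n : ℕ, (((tau β)^[n] 1 : ℝ) : ℂ) * (z / β) ^ n := by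
    rw [hτ.of_norm.tsum_eq_zero_add, psi, Function.iterate_zero_apply, Complex.ofReal_one,
      pow_zero, one_mul]
  have key := sub_tsum_dig_mul_pow (β := β) h1 hw
  rw [mul_div_cancel₀ _ (by exact_mod_cast hβ0.ne'), Complex.ofReal_one] at key
  rw [phi, key, hψ]
end

section
/- The set of real numbers β ∈ (1,∞) such that the set {t ∈ ℝ : −β < t < 0 and φ_β(t) = 1} is infinite (i.e. the analytic function 1 − φ_β has infinitely many zeros on the interval (−β, 0)) is dense in (1,∞). -/
open scoped BigOperators

/-!
Off a countable set, every `β₁ > 1` has infinitely many nonzero greedy digits `a_n` of `1`.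
Lower one of them, `a_{M+1} ≥ 1` with `M` large, by one, and continue the digit string with very
sparse blocks of `1`s spaced by an even gap `g`. For `β` near `β₁` the value of this string at
`β⁻¹` runs from above `1` to below `1`, so it equals `1` for some `β`; Parry's lexicographic
condition on the prefix and the sparsity of the rest (tails at most `θ / (1 - θ ^ g) < 1`) make it
the greedy expansion of `1` in base `β`. Then `φ_β(-β r) = ∑ c_n (-r) ^ (n + 1)`, and at the
radius `r_j = 1 - 1 / (2 P_j)`, `P_j` the end of block `j`, this block dominates: with sign
`(-1) ^ (j + 1)` it contributes at least half its length, more than all earlier digits together,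
while all later digits contribute less than `1`. So `φ_β(-β r) - 1` changes sign between
consecutive radii.
-/

open Finset

/-- `greedyDigit β n = a_{n+1}(β, 1)`, indexed from `0` and valued in `ℕ` (see `dig_one_succ`). -/
noncomputable def greedyDigit (β : ℝ) (n : ℕ) : ℕ := ⌊β * (tau β)^[n] 1⌋₊

section Greedy

variable {β : ℝ}

lemma exists_one_lt_pow_mul (hβ : 1 < β) {x : ℝ} (hx : 0 < x) : ∃ t : ℕ, 1 < β ^ t * x := by
  obtain ⟨t, ht⟩ := pow_unbounded_of_one_lt x⁻¹ hβ
  refine ⟨t, ?_⟩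
  simpa [inv_mul_cancel₀ hx.ne'] using mul_lt_mul_of_pos_right ht hx

lemma tau_nonneg (β x : ℝ) : 0 ≤ tau β x := Int.fract_nonneg _

lemma tau_lt_one (β x : ℝ) : tau β x < 1 := Int.fract_lt_one _

lemma tau_iterate_nonneg (β : ℝ) : ∀ n : ℕ, 0 ≤ (tau β)^[n] 1
  | 0 => zero_le_one
  | n + 1 => by rw [Function.iterate_succ_apply']; exact tau_nonneg _ _

lemma tau_iterate_lt_one (β : ℝ) {n : ℕ} (hn : n ≠ 0) : (tau β)^[n] 1 < 1 := by
  obtain ⟨m, rfl⟩ := Nat.exists_eq_succ_of_ne_zero hn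
  rw [Function.iterate_succ_apply']
  exact tau_lt_one _ _

lemma tau_iterate_le_one (β : ℝ) (n : ℕ) : (tau β)^[n] 1 ≤ 1 := by
  rcases eq_or_ne n 0 with rfl | hn
  · rfl
  · exact (tau_iterate_lt_one β hn).le

lemma dig_one_succ (hβ : 0 ≤ β) (n : ℕ) : dig β 1 (n + 1) = greedyDigit β n := by
  rw [greedyDigit, Int.natCast_floor_eq_floor (mul_nonneg hβ (tau_iterate_nonneg β n))]
  rfl

lemma tau_iterate_succ (hβ : 0 ≤ β) (n : ℕ) :
    (tau β)^[n + 1] 1 = β * (tau β)^[n] 1 - greedyDigit β n := by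
  rw [Function.iterate_succ_apply', tau, greedyDigit,
    ← Int.natCast_floor_eq_floor (mul_nonneg hβ (tau_iterate_nonneg β n))]
  push_cast
  rfl

lemma greedyDigit_le_floor (hβ : 0 ≤ β) (n : ℕ) : greedyDigit β n ≤ ⌊β⌋₊ :=
  Nat.floor_le_floor (mul_le_of_le_one_right hβ (tau_iterate_le_one β n))

lemma sum_greedyDigit_mul_inv_pow (hβ : 0 < β) (K : ℕ) :
    ∑ n ∈ range K, (greedyDigit β n : ℝ) * β⁻¹ ^ (n + 1) = 1 - (tau β)^[K] 1 * β⁻¹ ^ K := by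
  induction K with
  | zero => simp
  | succ K ih =>
    rw [sum_range_succ, ih, tau_iterate_succ hβ.le, pow_succ]
    field_simp
    ring

lemma tau_iterate_sub_tau_iterate_add (hβ : 0 ≤ β) {k t : ℕ}
    (h : ∀ i < t, greedyDigit β (k + i) = greedyDigit β i) :
    (tau β)^[t] 1 - (tau β)^[k + t] 1 = β ^ t * (1 - (tau β)^[k] 1) := by
  induction t with
  | zero => simp
  | succ t ih =>
    have := ih fun i hi => h i (hi.trans t.lt_succ_self)
    rw [← add_assoc, tau_iterate_succ hβ, tau_iterate_succ hβ, h t t.lt_succ_self, pow_succ]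
    linear_combination β * this

/-- Parry's condition: the digits cannot agree forever since `τ^[i] 1 - τ^[k + i] 1` would grow
like `β ^ i`, and at the first disagreement `τ^[k + i] 1 < τ^[i] 1`. -/
theorem toLex_greedyDigit_shift_lt (hβ : 1 < β) {k : ℕ} (hk : k ≠ 0) :
    toLex (fun i => greedyDigit β (k + i)) < toLex (greedyDigit β) := by
  classical
  have hβ0 : 0 ≤ β := by linarith
  have hgap : 0 < 1 - (tau β)^[k] 1 := sub_pos.2 (tau_iterate_lt_one β hk)
  have hne : ∃ i, greedyDigit β (k + i) ≠ greedyDigit β i := by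
    by_contra! h
    obtain ⟨t, ht⟩ := exists_one_lt_pow_mul hβ hgap
    have := tau_iterate_sub_tau_iterate_add (t := t) hβ0 fun i _ => h i
    linarith [tau_iterate_le_one β t, tau_iterate_nonneg β (k + t)]
  let i := Nat.find hne
  have hagree : ∀ j < i, greedyDigit β (k + j) = greedyDigit β j := fun j hj =>
    not_not.1 (Nat.find_min hne hj)
  refine ⟨i, hagree, lt_of_le_of_ne ?_ (Nat.find_spec hne)⟩
  have hlt : (tau β)^[k + i] 1 < (tau β)^[i] 1 := by
    have := tau_iterate_sub_tau_iterate_add hβ0 hagree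
    nlinarith [pow_pos (zero_lt_one.trans hβ) i]
  exact Nat.floor_le_floor (mul_le_mul_of_nonneg_left hlt.le hβ0)

lemma tau_iterate_eq_zero_of_greedyDigit_eq_zero (hβ : 1 < β) {n₀ : ℕ}
    (h : ∀ n, n₀ ≤ n → greedyDigit β n = 0) : (tau β)^[n₀] 1 = 0 := by
  have hgrow : ∀ t, (tau β)^[n₀ + t] 1 = β ^ t * (tau β)^[n₀] 1 := by
    intro t
    induction t with
    | zero => simp
    | succ t ih =>
      rw [← add_assoc, tau_iterate_succ (by linarith), ih, h _ (Nat.le_add_right _ _)]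
      push_cast
      ring
  by_contra hne
  obtain ⟨t, ht⟩ := exists_one_lt_pow_mul hβ ((tau_iterate_nonneg β n₀).lt_of_ne' hne)
  linarith [hgrow t, tau_iterate_le_one β (n₀ + t)]

end Greedy

/-- With `θ = β⁻¹` this is the number whose `β`-expansion has digits `c k, c (k + 1), …`. -/
noncomputable def tailSum (c : ℕ → ℕ) (θ : ℝ) (k : ℕ) : ℝ := ∑' i, (c (k + i) : ℝ) * θ ^ (i + 1)

section TailSum

variable {c : ℕ → ℕ} {K : ℕ} {θ : ℝ}

lemma summable_digits (hc : ∀ n, c n ≤ K) (hθ : |θ| < 1) (k : ℕ) :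
    Summable fun i => (c (k + i) : ℝ) * θ ^ (i + 1) := by
  refine .of_norm_bounded ((summable_geometric_of_lt_one (abs_nonneg θ) hθ).mul_left (K * |θ|))
    fun i => ?_
  rw [norm_mul, norm_pow, Real.norm_eq_abs, Real.norm_eq_abs, Nat.abs_cast, pow_succ',
    ← mul_assoc]
  gcongr
  exact_mod_cast hc _

lemma tailSum_eq_add (hc : ∀ n, c n ≤ K) (hθ : |θ| < 1) (k : ℕ) :
    tailSum c θ k = c k * θ + θ * tailSum c θ (k + 1) := by
  rw [tailSum, (summable_digits hc hθ k).tsum_eq_zero_add, tailSum, ← tsum_mul_left]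
  congr 1
  · simp
  · exact tsum_congr fun i => by rw [show k + (i + 1) = k + 1 + i by omega]; ring

lemma tailSum_eq_sum_add (hc : ∀ n, c n ≤ K) (hθ : |θ| < 1) (k t : ℕ) :
    tailSum c θ k = ∑ i ∈ range t, (c (k + i) : ℝ) * θ ^ (i + 1) + θ ^ t * tailSum c θ (k + t) := by
  induction t with
  | zero => simp
  | succ t ih =>
    rw [ih, sum_range_succ, tailSum_eq_add hc hθ (k + t), ← add_assoc k]
    ring

lemma tailSum_nonneg (hθ : 0 ≤ θ) (k : ℕ) : 0 ≤ tailSum c θ k :=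
  tsum_nonneg fun i => by positivity

lemma abs_tailSum_le (hc : ∀ n, c n ≤ K) (hθ : |θ| < 1) (k : ℕ) :
    |tailSum c θ k| ≤ tailSum c |θ| k := by
  have hsum := summable_digits hc (by rwa [abs_abs]) k
  have hnorm : ∀ i, ‖(c (k + i) : ℝ) * θ ^ (i + 1)‖ = (c (k + i) : ℝ) * |θ| ^ (i + 1) := by
    simp
  calc |tailSum c θ k| ≤ ∑' i, ‖(c (k + i) : ℝ) * θ ^ (i + 1)‖ :=
        norm_tsum_le_tsum_norm (hsum.congr fun i => (hnorm i).symm)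
    _ = tailSum c |θ| k := tsum_congr hnorm

lemma tailSum_le_of_le_one (hc : ∀ n, c n ≤ K) (hθ0 : 0 ≤ θ) (hθ1 : θ < 1) {k : ℕ}
    (hc1 : ∀ n ≥ k, c n ≤ 1) : tailSum c θ k ≤ θ / (1 - θ) := by
  have hgeom : HasSum (fun i : ℕ => θ ^ (i + 1)) (θ / (1 - θ)) := by
    simpa [pow_succ', div_eq_mul_inv] using (hasSum_geometric_of_lt_one hθ0 hθ1).mul_left θ
  refine (summable_digits hc (by rwa [abs_of_nonneg hθ0]) k).tsum_le_tsum (fun i => ?_)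
    hgeom.summable |>.trans_eq hgeom.tsum_eq
  exact mul_le_of_le_one_left (by positivity) (by exact_mod_cast hc1 _ (Nat.le_add_right _ _))

lemma continuousOn_tailSum (hc : ∀ n, c n ≤ K) (k : ℕ) :
    ContinuousOn (fun θ => tailSum c θ k) (Set.Ioo (-1) 1) := by
  intro x hx
  obtain ⟨ρ, hxρ, hρ⟩ := exists_between (abs_lt.2 hx)
  have hρ1 : |ρ| < 1 := by rwa [abs_of_nonneg ((abs_nonneg x).trans hxρ.le)]
  have hcont : ContinuousOn (fun θ => tailSum c θ k) (Set.Icc (-ρ) ρ) := by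
    refine continuousOn_tsum (fun i => by fun_prop)
      (summable_digits (c := fun _ => K) (fun _ => le_rfl) hρ1 0) fun i θ hθ => ?_
    rw [norm_mul, norm_pow, Real.norm_eq_abs, Real.norm_eq_abs, Nat.abs_cast]
    gcongr
    · exact_mod_cast hc _
    · exact abs_le.2 hθ
  exact (hcont.continuousAt (Icc_mem_nhds (by linarith [neg_abs_le x])
    (by linarith [le_abs_self x]))).continuousWithinAt

lemma tailSum_eq_add_pow_mul_of_gap (hc : ∀ n, c n ≤ K) (hθ : |θ| < 1) {k g : ℕ} (hg : g ≠ 0)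
    (hk : c k = 1) (hgap : ∀ i, 0 < i → i < g → c (k + i) = 0) :
    tailSum c θ k = θ + θ ^ g * tailSum c θ (k + g) := by
  have hzero : tailSum c θ (k + 1) = θ ^ (g - 1) * tailSum c θ (k + g) := by
    rw [tailSum_eq_sum_add hc hθ (k + 1) (g - 1), sum_eq_zero, zero_add,
      show k + 1 + (g - 1) = k + g by omega]
    intro i hi
    rw [show k + 1 + i = k + (i + 1) by omega, hgap (i + 1) (by omega) (by simp at hi; omega),
      Nat.cast_zero, zero_mul]
  rw [tailSum_eq_add hc hθ, hk, hzero, Nat.cast_one, one_mul, ← mul_assoc, ← pow_succ',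
    Nat.sub_add_cancel (Nat.one_le_iff_ne_zero.2 hg)]

lemma tailSum_le_of_sparse (hc : ∀ n, c n ≤ K) (hθ0 : 0 ≤ θ) (hθ1 : θ < 1) {N g : ℕ}
    (hg : g ≠ 0) (hc1 : ∀ n ≥ N, c n ≤ 1)
    (hgap : ∀ n ≥ N, c n ≠ 0 → ∀ i, 0 < i → i < g → c (n + i) = 0) :
    ∀ k ≥ N, tailSum c θ k ≤ θ / (1 - θ ^ g) := by
  have hθ : |θ| < 1 := by rwa [abs_of_nonneg hθ0]
  have hθg : θ ^ g < 1 := pow_lt_one₀ hθ0 hθ1 hg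
  set S := (fun k => tailSum c θ k) '' Set.Ici N
  have hbdd : BddAbove S := ⟨θ / (1 - θ), by
    rintro _ ⟨k, hk, rfl⟩
    exact tailSum_le_of_le_one hc hθ0 hθ1 fun n hn => hc1 n (le_trans hk hn)⟩
  have hle : ∀ k ≥ N, tailSum c θ k ≤ sSup S := fun k hk => le_csSup hbdd ⟨k, hk, rfl⟩
  have hstep : ∀ k ≥ N, tailSum c θ k ≤ max (θ * sSup S) (θ + θ ^ g * sSup S) := by
    intro k hk
    rcases Nat.le_one_iff_eq_zero_or_eq_one.1 (hc1 k hk) with h0 | h1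
    · rw [tailSum_eq_add hc hθ, h0, Nat.cast_zero, zero_mul, zero_add]
      exact le_max_of_le_left (by gcongr; exact hle _ (by omega))
    · rw [tailSum_eq_add_pow_mul_of_gap hc hθ hg h1 (hgap k hk (by omega))]
      exact le_max_of_le_right (by gcongr; exact hle _ (by omega))
  have hsup : sSup S ≤ max (θ * sSup S) (θ + θ ^ g * sSup S) :=
    csSup_le ⟨_, N, le_refl N, rfl⟩ (by rintro _ ⟨k, hk, rfl⟩; exact hstep k hk)
  intro k hk
  refine (hle k hk).trans ?_
  rw [le_div_iff₀ (by linarith)]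
  rcases le_max_iff.1 hsup with h | h <;> nlinarith [tailSum_nonneg (c := c) hθ0 k, hle k hk]

end TailSum

section Criterion

variable {c : ℕ → ℕ} {K : ℕ}

lemma toLex_shift_lt_of_lt_of_eqOn {d : ℕ → ℕ} {M : ℕ}
    (hd : ∀ k, 0 < k → toLex (fun i => d (k + i)) < toLex d)
    (heq : ∀ i < M, c i = d i) (hM : c M < d M) :
    ∀ k, 0 < k → k ≤ M → toLex (fun i => c (k + i)) < toLex c := by
  intro k hk hkM
  obtain ⟨i, hi, hlt⟩ : ∃ i, (∀ j < i, d (k + j) = d j) ∧ d (k + i) < d i := hd k hk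
  show ∃ i, (∀ j < i, c (k + j) = c j) ∧ c (k + i) < c i
  by_cases hkiM : k + i < M
  · refine ⟨i, fun j hj => ?_, ?_⟩
    · rw [heq _ (by omega), heq _ (by omega), hi j hj]
    · rwa [heq _ hkiM, heq _ (by omega)]
  · refine ⟨M - k, fun j hj => ?_, ?_⟩
    · rw [heq _ (by omega), heq _ (by omega), hi j (by omega)]
    · have hle : d (k + (M - k)) ≤ d (M - k) := by
        rcases (show M - k ≤ i by omega).lt_or_eq with h | h
        · exact (hi _ h).le
        · exact h ▸ hlt.le
      rw [Nat.add_sub_cancel' hkM] at hle ⊢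
      rw [heq (M - k) (by omega)]
      exact hM.trans_le hle

lemma tailSum_lt_one_of_toLex_lt (hc : ∀ n, c n ≤ K) {θ : ℝ} (hθ0 : 0 < θ) (hθ1 : θ < 1)
    (h0 : tailSum c θ 0 = 1) {N : ℕ}
    (hlex : ∀ k, 0 < k → k < N → toLex (fun i => c (k + i)) < toLex c)
    (htail : ∀ k ≥ N, tailSum c θ k < 1) : ∀ k, 0 < k → tailSum c θ k < 1 := by
  have hθ : |θ| < 1 := by rwa [abs_of_pos hθ0]
  suffices ∀ m k, 0 < k → N ≤ k + m → tailSum c θ k < 1 from fun k hk => this N k hk (by omega)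
  intro m
  induction m using Nat.strong_induction_on with
  | _ m ih =>
    intro k hk hkm
    rcases le_or_gt N k with hNk | hkN
    · exact htail k hNk
    obtain ⟨j, hagree, hlt⟩ : ∃ j, (∀ i < j, c (k + i) = c i) ∧ c (k + j) < c j :=
      hlex k hk hkN
    have hnext : tailSum c θ (k + j + 1) < 1 := by
      rcases le_or_gt N (k + j + 1) with h | h
      · exact htail _ h
      · exact ih (m - (j + 1)) (by omega) _ (by omega) (by omega)
    have hsplit := tailSum_eq_sum_add hc hθ k j
    have hsplit0 := tailSum_eq_sum_add hc hθ 0 j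
    simp only [h0, zero_add] at hsplit0
    have hsum : ∑ i ∈ range j, (c (k + i) : ℝ) * θ ^ (i + 1)
        = ∑ i ∈ range j, (c i : ℝ) * θ ^ (i + 1) :=
      sum_congr rfl fun i hi => by rw [hagree i (mem_range.1 hi)]
    rw [tailSum_eq_add hc hθ (k + j)] at hsplit
    rw [tailSum_eq_add hc hθ j] at hsplit0
    have hdigit : (c (k + j) : ℝ) + 1 ≤ c j := by exact_mod_cast hlt
    have hθj : 0 < θ ^ j * θ := mul_pos (pow_pos hθ0 j) hθ0
    -- comparing with the expansion of `1 = tailSum c θ 0` at the first difference `j`: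
    -- `tailSum c θ k - 1 ≤ θ ^ (j + 1) * (tailSum c θ (k + j + 1) - 1)`
    nlinarith [mul_pos hθj (sub_pos.2 hnext), mul_nonneg hθj.le (sub_nonneg.2 hdigit),
      mul_nonneg hθj.le (tailSum_nonneg (c := c) hθ0.le (j + 1))]

theorem greedyDigit_eq_of_tailSum {β : ℝ} (hβ : 1 < β) (hc : ∀ n, c n ≤ K)
    (h0 : tailSum c β⁻¹ 0 = 1) (hlt : ∀ k, 0 < k → tailSum c β⁻¹ k < 1) : greedyDigit β = c := by
  have hβ0 : 0 < β := by linarith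
  have hθ : |β⁻¹| < 1 := by rw [abs_inv, abs_of_pos hβ0]; exact inv_lt_one_of_one_lt₀ hβ
  have hmul : ∀ n, β * tailSum c β⁻¹ n = c n + tailSum c β⁻¹ (n + 1) := by
    intro n
    rw [tailSum_eq_add hc hθ]
    field_simp
  have hdigit : ∀ n, (tau β)^[n] 1 = tailSum c β⁻¹ n → greedyDigit β n = c n := by
    intro n hn
    have hT := tailSum_nonneg (c := c) (inv_nonneg.2 hβ0.le) (n + 1)
    rw [greedyDigit, hn, hmul, Nat.floor_eq_iff (by positivity)]
    exact ⟨le_add_of_nonneg_right hT, by linarith [hlt (n + 1) n.succ_pos]⟩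
  have horbit : ∀ n, (tau β)^[n] 1 = tailSum c β⁻¹ n := by
    intro n
    induction n with
    | zero => exact h0.symm
    | succ n ih => rw [tau_iterate_succ hβ0.le, hdigit n ih, ih, hmul]; ring
  exact funext fun n => hdigit n (horbit n)

end Criterion

section Blocks

/-- Block `j` occupies the positions `blockStart j + g * m`, `m < blockLen j`. Its length
`2 * (K * blockStart j + 2)` outweighs the digits before it; starting block `j + 1` beyond
`4 * blockEnd j ^ 2` makes the digits after block `j` negligible at `blockRadius j`; and the
`+ j + 1` gives `blockStart j ≡ j [MOD 2]`. -/
def blockStart (N g K : ℕ) : ℕ → ℕ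
  | 0 => 2 * N
  | j + 1 => 4 * (blockStart N g K j + g * (2 * (K * blockStart N g K j + 2))) ^ 2 + j + 1

def blockLen (N g K j : ℕ) : ℕ := 2 * (K * blockStart N g K j + 2)

def blockEnd (N g K j : ℕ) : ℕ := blockStart N g K j + g * blockLen N g K j

def blockOnes (N g K : ℕ) : Set ℕ :=
  {n | ∃ j, ∃ m < blockLen N g K j, n = blockStart N g K j + g * m}

noncomputable def sparseDigits (e : ℕ → ℕ) (N g K n : ℕ) : ℕ :=
  if n < N then e n else (blockOnes N g K).indicator 1 n

variable {N g K : ℕ} {e : ℕ → ℕ}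

lemma blockStart_succ (j : ℕ) : blockStart N g K (j + 1) = 4 * blockEnd N g K j ^ 2 + j + 1 :=
  rfl

lemma blockEnd_lt_blockStart_succ (j : ℕ) : blockEnd N g K j < blockStart N g K (j + 1) := by
  rw [blockStart_succ]
  nlinarith

lemma blockStart_strictMono : StrictMono (blockStart N g K) :=
  strictMono_nat_of_lt_succ fun j =>
    (Nat.le_add_right _ _).trans_lt (blockEnd_lt_blockStart_succ j)

lemma le_blockStart (j : ℕ) : N ≤ blockStart N g K j :=
  (show N ≤ 2 * N by omega).trans (blockStart_strictMono.monotone (Nat.zero_le j))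

lemma blockStart_mod_two (j : ℕ) : blockStart N g K j % 2 = j % 2 := by
  cases j with
  | zero => simp [blockStart]
  | succ j => rw [blockStart_succ]; omega

lemma blockStart_add_mul_le_blockEnd {j m : ℕ} (hm : m ≤ blockLen N g K j) :
    blockStart N g K j + g * m ≤ blockEnd N g K j :=
  Nat.add_le_add_left (Nat.mul_le_mul_left g hm) _

lemma blockStart_add_mul_lt_blockStart_succ {j m : ℕ} (hm : m ≤ blockLen N g K j) :
    blockStart N g K j + g * m < blockStart N g K (j + 1) :=
  (blockStart_add_mul_le_blockEnd hm).trans_lt (blockEnd_lt_blockStart_succ j)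

lemma mem_blockOnes_iff {j n : ℕ} (hn : blockStart N g K j ≤ n)
    (hn' : n < blockStart N g K (j + 1)) :
    n ∈ blockOnes N g K ↔ ∃ m < blockLen N g K j, n = blockStart N g K j + g * m := by
  refine ⟨fun ⟨i, m, hm, hni⟩ => ?_, fun ⟨m, hm, hnm⟩ => ⟨j, m, hm, hnm⟩⟩
  have hmono := (blockStart_strictMono (N := N) (g := g) (K := K)).monotone
  rcases lt_trichotomy i j with hij | rfl | hij
  · have := blockStart_add_mul_lt_blockStart_succ hm.le
    have := hmono (show i + 1 ≤ j from hij)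
    omega
  · exact ⟨m, hm, hni⟩
  · have := hmono (show j + 1 ≤ i from hij)
    omega

lemma add_notMem_blockOnes {n i : ℕ} (hn : n ∈ blockOnes N g K) (hi : 0 < i) (hig : i < g) :
    n + i ∉ blockOnes N g K := by
  obtain ⟨j, m, hm, rfl⟩ := hn
  have hlt : blockStart N g K j + g * m + i < blockStart N g K (j + 1) := by
    have := blockStart_add_mul_lt_blockStart_succ (m := m + 1) hm
    rw [mul_add_one] at this
    omega
  rw [mem_blockOnes_iff (by omega) hlt]
  rintro ⟨m', -, hm'⟩
  have hdvd : g ∣ i :=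
    (Nat.dvd_add_right (dvd_mul_right g m)).1 ((by omega : g * m + i = g * m') ▸ dvd_mul_right g m')
  exact hi.ne' (Nat.eq_zero_of_dvd_of_lt hdvd hig)

lemma sparseDigits_of_lt {n : ℕ} (hn : n < N) : sparseDigits e N g K n = e n := if_pos hn

lemma sparseDigits_of_ge {n : ℕ} (hn : N ≤ n) :
    sparseDigits e N g K n = (blockOnes N g K).indicator 1 n := if_neg (by omega)

lemma sparseDigits_le_one {n : ℕ} (hn : N ≤ n) : sparseDigits e N g K n ≤ 1 := by
  rw [sparseDigits_of_ge hn]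
  exact Set.indicator_le_self' (fun _ _ => zero_le_one) n

lemma sparseDigits_le (he : ∀ n < N, e n ≤ K) (hK : 1 ≤ K) (n : ℕ) :
    sparseDigits e N g K n ≤ K := by
  rcases lt_or_ge n N with hn | hn
  · rw [sparseDigits_of_lt hn]; exact he n hn
  · exact (sparseDigits_le_one hn).trans hK

lemma sparseDigits_add_eq_zero {n : ℕ} (hn : N ≤ n) (hc : sparseDigits e N g K n ≠ 0) {i : ℕ}
    (hi : 0 < i) (hig : i < g) : sparseDigits e N g K (n + i) = 0 := by
  rw [sparseDigits_of_ge hn, Set.indicator_apply_ne_zero] at hc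
  rw [sparseDigits_of_ge (by omega), Set.indicator_of_notMem (add_notMem_blockOnes hc.1 hi hig)]

lemma sum_Ico_sparseDigits (hg : g ≠ 0) (f : ℕ → ℝ) (j : ℕ) :
    ∑ n ∈ Ico (blockStart N g K j) (blockStart N g K (j + 1)), (sparseDigits e N g K n : ℝ) * f n
      = ∑ m ∈ range (blockLen N g K j), f (blockStart N g K j + g * m) := by
  classical
  have hind : ∀ n ∈ Ico (blockStart N g K j) (blockStart N g K (j + 1)),
      (sparseDigits e N g K n : ℝ) * f n = (blockOnes N g K).indicator f n := by
    intro n hn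
    rw [sparseDigits_of_ge ((le_blockStart j).trans (mem_Ico.1 hn).1)]
    by_cases h : n ∈ blockOnes N g K <;> simp [h]
  have himage : {n ∈ Ico (blockStart N g K j) (blockStart N g K (j + 1)) | n ∈ blockOnes N g K}
      = (range (blockLen N g K j)).image fun m => blockStart N g K j + g * m := by
    ext n
    simp only [mem_filter, mem_Ico, mem_image, mem_range]
    constructor
    · rintro ⟨hn, hS⟩
      obtain ⟨m, hm, rfl⟩ := (mem_blockOnes_iff hn.1 hn.2).1 hS
      exact ⟨m, hm, rfl⟩
    · rintro ⟨m, hm, rfl⟩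
      exact ⟨⟨Nat.le_add_right _ _, blockStart_add_mul_lt_blockStart_succ hm.le⟩, j, m, hm, rfl⟩
  rw [sum_congr rfl hind, sum_indicator_eq_sum_filter, himage,
    sum_image fun m _ m' _ h => by simpa [hg] using h]

lemma sum_Ico_sparseDigits_mul_neg_pow (hg : g ≠ 0) (hg2 : Even g) (x : ℝ) (j : ℕ) :
    ∑ n ∈ Ico (blockStart N g K j) (blockStart N g K (j + 1)),
        (sparseDigits e N g K n : ℝ) * (-x) ^ (n + 1)
      = (-1) ^ (j + 1) * ∑ m ∈ range (blockLen N g K j), x ^ (blockStart N g K j + g * m + 1) := by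
  rw [sum_Ico_sparseDigits hg, mul_sum]
  refine sum_congr rfl fun m _ => ?_
  have hgm : g * m % 2 = 0 := Nat.even_iff.1 (hg2.mul_right m)
  have hp := blockStart_mod_two (N := N) (g := g) (K := K) j
  rw [neg_pow, neg_one_pow_congr (n := j + 1) (by simp only [Nat.even_iff]; omega)]

end Blocks

section Oscillation

lemma one_sub_pow_mul_one_add_le {x : ℝ} (hx0 : 0 ≤ x) (hx1 : x ≤ 1) (q : ℕ) :
    (1 - x) ^ q * (1 + q * x) ≤ 1 :=
  calc (1 - x) ^ q * (1 + q * x) ≤ (1 - x) ^ q * (1 + x) ^ q :=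
        mul_le_mul_of_nonneg_left (one_add_mul_le_pow (by linarith) q) (pow_nonneg (by linarith) q)
    _ = (1 - x ^ 2) ^ q := by rw [← mul_pow]; ring
    _ ≤ 1 := pow_le_one₀ (by nlinarith) (by nlinarith)

lemma abs_tailSum_sub_sum_Ico_le {c : ℕ → ℕ} {K : ℕ} (hc : ∀ n, c n ≤ K) {θ : ℝ} (hθ : |θ| < 1)
    {p q : ℕ} (hpq : p ≤ q) (hc1 : ∀ n ≥ q, c n ≤ 1) :
    |tailSum c θ 0 - ∑ n ∈ Ico p q, (c n : ℝ) * θ ^ (n + 1)| ≤ K * p + |θ| ^ q / (1 - |θ|) := by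
  have hsplit := tailSum_eq_sum_add hc hθ 0 q
  simp only [zero_add] at hsplit
  rw [hsplit, ← sum_range_add_sum_Ico _ hpq, add_sub_right_comm, add_sub_cancel_right]
  have hhead : |∑ n ∈ range p, (c n : ℝ) * θ ^ (n + 1)| ≤ K * p := by
    calc |∑ n ∈ range p, (c n : ℝ) * θ ^ (n + 1)|
        ≤ ∑ n ∈ range p, |(c n : ℝ) * θ ^ (n + 1)| := abs_sum_le_sum_abs _ _
      _ ≤ ∑ n ∈ range p, (K : ℝ) := sum_le_sum fun n _ => by
          rw [abs_mul, abs_pow, Nat.abs_cast]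
          have h1 : (c n : ℝ) ≤ K := by exact_mod_cast hc n
          have h2 : |θ| ^ (n + 1) ≤ 1 := pow_le_one₀ (abs_nonneg θ) hθ.le
          nlinarith [pow_nonneg (abs_nonneg θ) (n + 1), Nat.cast_nonneg (α := ℝ) (c n)]
      _ = K * p := by simp [mul_comm]
  have htail : |θ ^ q * tailSum c θ q| ≤ |θ| ^ q / (1 - |θ|) := by
    rw [abs_mul, abs_pow, div_eq_mul_inv]
    gcongr
    calc |tailSum c θ q| ≤ tailSum c |θ| q := abs_tailSum_le hc hθ q
      _ ≤ |θ| / (1 - |θ|) := tailSum_le_of_le_one hc (abs_nonneg θ) hθ hc1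
      _ ≤ (1 - |θ|)⁻¹ := by
        rw [div_eq_mul_inv]
        exact mul_le_of_le_one_left (inv_nonneg.2 (by linarith)) hθ.le
  exact (abs_add_le _ _).trans (add_le_add hhead htail)

variable {N g K : ℕ} {e : ℕ → ℕ}

lemma blockEnd_pos (hg : g ≠ 0) (j : ℕ) : 0 < blockEnd N g K j :=
  Nat.add_pos_right _ (Nat.mul_pos (Nat.pos_of_ne_zero hg) (by simp [blockLen]))

noncomputable def blockRadius (N g K j : ℕ) : ℝ := 1 - (2 * blockEnd N g K j : ℝ)⁻¹

lemma blockRadius_pos (hg : g ≠ 0) (j : ℕ) : 0 < blockRadius N g K j := by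
  have : (1 : ℝ) ≤ blockEnd N g K j := by exact_mod_cast blockEnd_pos hg j
  rw [blockRadius, sub_pos]
  exact inv_lt_one_of_one_lt₀ (by linarith)

lemma blockRadius_lt_one (hg : g ≠ 0) (j : ℕ) : blockRadius N g K j < 1 := by
  have : (0 : ℝ) < blockEnd N g K j := by exact_mod_cast blockEnd_pos hg j
  rw [blockRadius, sub_lt_self_iff]
  positivity

lemma blockRadius_strictMono (hg : g ≠ 0) : StrictMono (blockRadius N g K) := by
  have hEnd : StrictMono (blockEnd N g K) := strictMono_nat_of_lt_succ fun j =>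
    (blockEnd_lt_blockStart_succ j).trans_le (Nat.le_add_right _ _)
  intro i j hij
  have : (0 : ℝ) < blockEnd N g K i := by exact_mod_cast blockEnd_pos hg i
  have : (blockEnd N g K i : ℝ) < blockEnd N g K j := by exact_mod_cast hEnd hij
  unfold blockRadius
  gcongr

lemma half_le_blockRadius_pow (hg : g ≠ 0) {j n : ℕ} (hn : n ≤ blockEnd N g K j) :
    1 / 2 ≤ blockRadius N g K j ^ n := by
  have hP : (1 : ℝ) ≤ blockEnd N g K j := by exact_mod_cast blockEnd_pos hg j
  calc 1 / 2 = 1 + (blockEnd N g K j : ℝ) * -(2 * blockEnd N g K j : ℝ)⁻¹ := by field_simp; ring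
    _ ≤ blockRadius N g K j ^ blockEnd N g K j := by
        rw [blockRadius, sub_eq_add_neg]
        refine one_add_mul_le_pow ?_ _
        have : (2 * blockEnd N g K j : ℝ)⁻¹ ≤ 1 := inv_le_one_of_one_le₀ (by linarith)
        linarith
    _ ≤ blockRadius N g K j ^ n :=
        pow_le_pow_of_le_one (blockRadius_pos hg j).le (blockRadius_lt_one hg j).le hn

lemma blockRadius_pow_div_lt_one (hg : g ≠ 0) (j : ℕ) :
    blockRadius N g K j ^ blockStart N g K (j + 1) / (1 - blockRadius N g K j) < 1 := by
  have hP : (1 : ℝ) ≤ blockEnd N g K j := by exact_mod_cast blockEnd_pos hg j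
  have hq : 4 * (blockEnd N g K j : ℝ) ^ 2 ≤ blockStart N g K (j + 1) := by
    rw [blockStart_succ]; push_cast; linarith
  set P : ℝ := (blockEnd N g K j : ℝ)
  set q : ℕ := blockStart N g K (j + 1)
  set x : ℝ := (2 * P)⁻¹
  have hx : 0 < x := by positivity
  have hqx : 1 ≤ q * x ^ 2 :=
    calc 1 = 4 * P ^ 2 * x ^ 2 := by simp only [x]; field_simp; norm_num
      _ ≤ q * x ^ 2 := by gcongr
  have hbound : (1 - x) ^ q * (1 + q * x) ≤ 1 :=
    one_sub_pow_mul_one_add_le hx.le (inv_le_one_of_one_le₀ (by linarith)) q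
  rw [blockRadius, sub_sub_cancel, div_lt_one hx]
  refine lt_of_mul_lt_mul_right (hbound.trans_lt ?_) (by positivity : (0 : ℝ) ≤ 1 + q * x)
  nlinarith

lemma add_two_le_sum_blockRadius_pow (hg : g ≠ 0) (j : ℕ) :
    (K * blockStart N g K j + 2 : ℝ)
      ≤ ∑ m ∈ range (blockLen N g K j), blockRadius N g K j ^ (blockStart N g K j + g * m + 1) := by
  have hhalf : ∀ m ∈ range (blockLen N g K j),
      (1 / 2 : ℝ) ≤ blockRadius N g K j ^ (blockStart N g K j + g * m + 1) := by
    intro m hm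
    refine half_le_blockRadius_pow hg ?_
    have := blockStart_add_mul_le_blockEnd (N := N) (K := K) (g := g) (j := j) (m := m + 1)
      (mem_range.1 hm)
    rw [mul_add_one] at this
    omega
  have hL : (blockLen N g K j : ℝ) = 2 * (K * blockStart N g K j + 2) := by
    simp only [blockLen]; push_cast; ring
  have := card_nsmul_le_sum _ _ _ hhalf
  rw [card_range, nsmul_eq_mul, hL] at this
  linarith

end Oscillation

section Zeros

variable {N g K : ℕ} {e : ℕ → ℕ}

theorem one_lt_neg_one_pow_mul_tailSum_blockRadius (he : ∀ n < N, e n ≤ K) (hK : 1 ≤ K)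
    (hg : g ≠ 0) (hg2 : Even g) (j : ℕ) :
    1 < (-1) ^ (j + 1) * tailSum (sparseDigits e N g K) (-blockRadius N g K j) 0 := by
  have hr0 := blockRadius_pos (N := N) (K := K) hg j
  have hθ : |-blockRadius N g K j| < 1 := by
    rw [abs_neg, abs_of_pos hr0]; exact blockRadius_lt_one hg j
  have herr := abs_tailSum_sub_sum_Ico_le (c := sparseDigits e N g K) (sparseDigits_le he hK) hθ
    ((blockStart_strictMono (N := N) (g := g) (K := K)).monotone j.le_succ) fun n hn =>
      sparseDigits_le_one ((le_blockStart (g := g) (K := K) (j + 1)).trans hn)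
  rw [abs_neg, abs_of_pos hr0, sum_Ico_sparseDigits_mul_neg_pow hg hg2] at herr
  have hB := add_two_le_sum_blockRadius_pow (N := N) (K := K) hg j
  have htail := blockRadius_pow_div_lt_one (N := N) (K := K) hg j
  set V := tailSum (sparseDigits e N g K) (-blockRadius N g K j) 0
  set s : ℝ := (-1) ^ (j + 1)
  set B := ∑ m ∈ range (blockLen N g K j), blockRadius N g K j ^ (blockStart N g K j + g * m + 1)
  have hs : s * s = 1 := by rw [← mul_pow]; norm_num
  have habs : |s * (V - s * B)| = |V - s * B| := by
    rw [abs_mul, abs_pow, abs_neg, abs_one, one_pow, one_mul]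
  have hsplit : s * V = s * (V - s * B) + B := by linear_combination B * hs
  linarith [neg_abs_le (s * (V - s * B))]

theorem infinite_setOf_tailSum_neg_eq_one (he : ∀ n < N, e n ≤ K) (hK : 1 ≤ K) (hg : g ≠ 0)
    (hg2 : Even g) :
    {z : ℝ | 0 < z ∧ z < 1 ∧ tailSum (sparseDigits e N g K) (-z) 0 = 1}.Infinite := by
  set r := blockRadius N g K
  have hr := blockRadius_strictMono (N := N) (K := K) hg
  have hzero : ∀ i, ∃ z ∈ Set.Icc (r (2 * i)) (r (2 * i + 1)),
      tailSum (sparseDigits e N g K) (-z) 0 = 1 := by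
    intro i
    have hcont : ContinuousOn (fun z => tailSum (sparseDigits e N g K) (-z) 0)
        (Set.Icc (r (2 * i)) (r (2 * i + 1))) :=
      (continuousOn_tailSum (sparseDigits_le he hK) 0).comp continuousOn_neg fun z hz =>
        ⟨by linarith [hz.2, blockRadius_lt_one (N := N) (K := K) hg (2 * i + 1)],
          by linarith [hz.1, blockRadius_pos (N := N) (K := K) hg (2 * i)]⟩
    have heven := one_lt_neg_one_pow_mul_tailSum_blockRadius he hK hg hg2 (2 * i)
    have hodd := one_lt_neg_one_pow_mul_tailSum_blockRadius he hK hg hg2 (2 * i + 1)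
    rw [pow_succ, (even_two_mul i).neg_one_pow] at heven
    rw [pow_succ, pow_succ, (even_two_mul i).neg_one_pow] at hodd
    exact intermediate_value_Icc (hr.monotone (Nat.le_succ _)) hcont ⟨by linarith, by linarith⟩
  choose z hz hz1 using hzero
  have hmono : StrictMono z := strictMono_nat_of_lt_succ fun i =>
    calc z i ≤ r (2 * i + 1) := (hz i).2
      _ < r (2 * (i + 1)) := hr (by omega)
      _ ≤ z (i + 1) := (hz (i + 1)).1
  refine Set.infinite_of_injective_forall_mem hmono.injective fun i =>
    ⟨(blockRadius_pos hg _).trans_le (hz i).1, (hz i).2.trans_lt (blockRadius_lt_one hg _), hz1 i⟩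

lemma phi_ofReal_mul {β : ℝ} (hβ : 0 < β) (θ : ℝ) :
    phi β ((β * θ : ℝ) : ℂ) = tailSum (greedyDigit β) θ 0 := by
  rw [phi, tailSum, Complex.ofReal_tsum]
  refine tsum_congr fun n => ?_
  push_cast
  rw [dig_one_succ hβ.le, zero_add, mul_div_cancel_left₀ _ (by exact_mod_cast hβ.ne')]
  norm_cast

theorem infinite_setOf_phi_eq_one {β : ℝ} (hβ : 0 < β) (he : ∀ n < N, e n ≤ K) (hK : 1 ≤ K)
    (hg : g ≠ 0) (hg2 : Even g)
    (hdig : greedyDigit β = sparseDigits e N g K) :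
    {t : ℝ | -β < t ∧ t < 0 ∧ phi β (t : ℂ) = 1}.Infinite := by
  refine ((infinite_setOf_tailSum_neg_eq_one he hK hg hg2).image (f := fun z => -(β * z))
    fun z _ z' _ h => by simpa [hβ.ne'] using h).mono ?_
  rintro _ ⟨z, ⟨hz0, hz1, hz⟩, rfl⟩
  refine ⟨by nlinarith, by nlinarith, ?_⟩
  simp only
  rw [show -(β * z) = β * -z by ring, phi_ofReal_mul hβ, hdig, hz, Complex.ofReal_one]

end Zeros

section Perturbation

lemma mul_sum_le_sum_mul_pow (e : ℕ → ℕ) (L : ℕ) {s θ : ℝ} (hs : 1 ≤ s) (hθ : 0 ≤ θ) :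
    s * ∑ n ∈ range L, (e n : ℝ) * θ ^ (n + 1) ≤ ∑ n ∈ range L, (e n : ℝ) * (s * θ) ^ (n + 1) := by
  rw [mul_sum]
  refine sum_le_sum fun n _ => ?_
  calc s * ((e n : ℝ) * θ ^ (n + 1)) ≤ s ^ (n + 1) * ((e n : ℝ) * θ ^ (n + 1)) :=
        mul_le_mul_of_nonneg_right (le_self_pow₀ hs n.succ_ne_zero) (by positivity)
    _ = (e n : ℝ) * (s * θ) ^ (n + 1) := by ring

noncomputable def perturbedDigits (β₁ : ℝ) (M g : ℕ) : ℕ → ℕ :=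
  sparseDigits (Function.update (greedyDigit β₁) M (greedyDigit β₁ M - 1)) (M + 1) g ⌊β₁⌋₊

variable {β₁ : ℝ} {M g : ℕ}

lemma update_greedyDigit_le (hβ₁ : 0 ≤ β₁) (M n : ℕ) :
    Function.update (greedyDigit β₁) M (greedyDigit β₁ M - 1) n ≤ ⌊β₁⌋₊ := by
  rcases eq_or_ne n M with rfl | hn
  · rw [Function.update_self]
    exact (Nat.sub_le _ _).trans (greedyDigit_le_floor hβ₁ n)
  · rw [Function.update_of_ne hn]
    exact greedyDigit_le_floor hβ₁ n

lemma perturbedDigits_le (hβ₁ : 1 ≤ β₁) (n : ℕ) : perturbedDigits β₁ M g n ≤ ⌊β₁⌋₊ :=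
  sparseDigits_le (fun n _ => update_greedyDigit_le (by linarith) M n)
    ((Nat.one_le_floor_iff _).2 hβ₁) n

lemma perturbedDigits_of_lt {n : ℕ} (hn : n < M) : perturbedDigits β₁ M g n = greedyDigit β₁ n := by
  rw [perturbedDigits, sparseDigits_of_lt (by omega), Function.update_of_ne hn.ne]

lemma perturbedDigits_self : perturbedDigits β₁ M g M = greedyDigit β₁ M - 1 := by
  rw [perturbedDigits, sparseDigits_of_lt (by omega), Function.update_self]

lemma sum_range_perturbedDigits (hM : greedyDigit β₁ M ≠ 0) (θ : ℝ) :
    ∑ n ∈ range (M + 1), (perturbedDigits β₁ M g n : ℝ) * θ ^ (n + 1)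
      = ∑ n ∈ range (M + 1), (greedyDigit β₁ n : ℝ) * θ ^ (n + 1) - θ ^ (M + 1) := by
  rw [sum_range_succ, sum_range_succ, perturbedDigits_self,
    sum_congr rfl fun n hn => by rw [perturbedDigits_of_lt (mem_range.1 hn)],
    Nat.cast_sub (Nat.one_le_iff_ne_zero.2 hM)]
  ring

lemma toLex_perturbedDigits_shift_lt (hβ₁ : 1 < β₁) (hM : greedyDigit β₁ M ≠ 0) {k : ℕ}
    (hk : 0 < k) (hkM : k < M + 1) :
    toLex (fun i => perturbedDigits β₁ M g (k + i)) < toLex (perturbedDigits β₁ M g) :=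
  toLex_shift_lt_of_lt_of_eqOn (fun k hk => toLex_greedyDigit_shift_lt hβ₁ hk.ne')
    (fun i hi => perturbedDigits_of_lt hi) (by rw [perturbedDigits_self]; omega) k hk (by omega)

lemma tailSum_perturbedDigits_le (hβ₁ : 1 ≤ β₁) (hg : g ≠ 0) {θ : ℝ} (hθ0 : 0 ≤ θ) (hθ1 : θ < 1)
    {k : ℕ} (hk : M + 1 ≤ k) : tailSum (perturbedDigits β₁ M g) θ k ≤ θ / (1 - θ ^ g) :=
  tailSum_le_of_sparse (perturbedDigits_le hβ₁) hθ0 hθ1 hg (fun _ hn => sparseDigits_le_one hn)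
    (fun _ hn hc _ hi hig => sparseDigits_add_eq_zero hn hc hi hig) k hk

lemma sum_range_perturbedDigits_mem_Icc (hβ₁ : 1 < β₁) (hM : greedyDigit β₁ M ≠ 0) :
    ∑ n ∈ range (M + 1), (perturbedDigits β₁ M g n : ℝ) * β₁⁻¹ ^ (n + 1)
      ∈ Set.Icc (1 - 2 * β₁⁻¹ ^ (M + 1)) 1 := by
  rw [sum_range_perturbedDigits hM, sum_greedyDigit_mul_inv_pow (by linarith)]
  have h0 := tau_iterate_nonneg β₁ (M + 1)
  have h1 := tau_iterate_le_one β₁ (M + 1)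
  have hpow : 0 < β₁⁻¹ ^ (M + 1) := by positivity
  constructor <;> nlinarith

lemma tailSum_perturbedDigits_inv_lt_one (hβ₁ : 1 ≤ β₁) (hg : g ≠ 0) {x : ℝ} (hx : 1 < x)
    (hρ : x⁻¹ + x⁻¹ ^ g < 1) {k : ℕ} (hk : M + 1 ≤ k) :
    tailSum (perturbedDigits β₁ M g) x⁻¹ k < 1 := by
  have hθ1 : x⁻¹ < 1 := inv_lt_one_of_one_lt₀ hx
  refine (tailSum_perturbedDigits_le hβ₁ hg (by positivity) hθ1 hk).trans_lt ?_
  rw [div_lt_one (by linarith [inv_pos.2 (zero_lt_one.trans hx)])]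
  linarith

lemma one_lt_tailSum_perturbedDigits_inv_zero {lam : ℝ} (hlam : 1 < lam) (hlamβ : lam ≤ β₁)
    (hM : greedyDigit β₁ M ≠ 0) (hlow : 2 * β₁⁻¹ ^ (M + 1) < 1 - lam / β₁) :
    1 < tailSum (perturbedDigits β₁ M g) lam⁻¹ 0 := by
  have hβ₁ : 1 < β₁ := hlam.trans_le hlamβ
  have hθ : |lam⁻¹| < 1 := by
    rw [abs_inv, abs_of_pos (by linarith)]; exact inv_lt_one_of_one_lt₀ hlam
  have hsplit := tailSum_eq_sum_add (perturbedDigits_le (M := M) (g := g) hβ₁.le) hθ 0 (M + 1)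
  simp only [zero_add] at hsplit
  have hscale := mul_sum_le_sum_mul_pow (perturbedDigits β₁ M g) (M + 1)
    (s := β₁ / lam) (θ := β₁⁻¹) ((one_le_div (by linarith)).2 hlamβ) (by positivity)
  rw [show β₁ / lam * β₁⁻¹ = lam⁻¹ by field_simp] at hscale
  have hpre := (sum_range_perturbedDigits_mem_Icc (g := g) hβ₁ hM).1
  have htail : 0 ≤ lam⁻¹ ^ (M + 1) * tailSum (perturbedDigits β₁ M g) lam⁻¹ (M + 1) :=
    mul_nonneg (by positivity) (tailSum_nonneg (by positivity) _)
  have hratio : β₁ / lam * (lam / β₁) = 1 := by field_simp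
  nlinarith [mul_lt_mul_of_pos_left (show lam / β₁ < 1 - 2 * β₁⁻¹ ^ (M + 1) by linarith)
    (show 0 < β₁ / lam by positivity)]

lemma tailSum_perturbedDigits_inv_zero_lt_one {B : ℝ} (hβ₁ : 1 < β₁) (hβB : β₁ ≤ B) (hg : g ≠ 0)
    (hρ : B⁻¹ + B⁻¹ ^ g < 1) (hM : greedyDigit β₁ M ≠ 0) (hup : β₁⁻¹ ^ (M + 1) < 1 - β₁ / B) :
    tailSum (perturbedDigits β₁ M g) B⁻¹ 0 < 1 := by
  have hB : 1 < B := hβ₁.trans_le hβB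
  have hθ : |B⁻¹| < 1 := by rw [abs_inv, abs_of_pos (by linarith)]; exact inv_lt_one_of_one_lt₀ hB
  have hsplit := tailSum_eq_sum_add (perturbedDigits_le (M := M) (g := g) hβ₁.le) hθ 0 (M + 1)
  simp only [zero_add] at hsplit
  have hscale := mul_sum_le_sum_mul_pow (perturbedDigits β₁ M g) (M + 1)
    (s := B / β₁) (θ := B⁻¹) ((one_le_div (by linarith)).2 hβB) (by positivity)
  rw [show B / β₁ * B⁻¹ = β₁⁻¹ by field_simp] at hscale
  have hpre := (sum_range_perturbedDigits_mem_Icc (g := g) hβ₁ hM).2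
  have htail := tailSum_perturbedDigits_inv_lt_one hβ₁.le hg hB hρ (le_refl (M + 1))
  have hpow : B⁻¹ ^ (M + 1) ≤ β₁⁻¹ ^ (M + 1) := by gcongr
  set P := ∑ n ∈ range (M + 1), (perturbedDigits β₁ M g n : ℝ) * B⁻¹ ^ (n + 1)
  have hpre' : P ≤ β₁ / B :=
    calc P = β₁ / B * (B / β₁ * P) := by field_simp
      _ ≤ β₁ / B * 1 := by gcongr; exact hscale.trans hpre
      _ = β₁ / B := mul_one _
  nlinarith [pow_pos (inv_pos.2 (zero_lt_one.trans hB)) (M + 1),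
    tailSum_nonneg (c := perturbedDigits β₁ M g) (inv_nonneg.2 (zero_le_one.trans hB.le)) (M + 1)]

theorem exists_greedyDigit_eq_perturbedDigits {β₁ lam B : ℝ} (hlam : 1 < lam) (hlamβ : lam ≤ β₁)
    (hβB : β₁ ≤ B) {M g : ℕ} (hg : g ≠ 0) (hρ : lam⁻¹ + lam⁻¹ ^ g < 1)
    (hM : greedyDigit β₁ M ≠ 0) (hlow : 2 * β₁⁻¹ ^ (M + 1) < 1 - lam / β₁)
    (hup : β₁⁻¹ ^ (M + 1) < 1 - β₁ / B) :
    ∃ β ∈ Set.Icc lam B, greedyDigit β = perturbedDigits β₁ M g := by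
  have hβ₁ : 1 < β₁ := hlam.trans_le hlamβ
  have hc := perturbedDigits_le (M := M) (g := g) hβ₁.le
  have hρ' : ∀ x, lam ≤ x → x⁻¹ + x⁻¹ ^ g < 1 := fun x hx => by
    have h : x⁻¹ ≤ lam⁻¹ := inv_anti₀ (by linarith) hx
    linarith [pow_le_pow_left₀ (inv_nonneg.2 (by linarith)) h g]
  have hcont : ContinuousOn (fun x => tailSum (perturbedDigits β₁ M g) x⁻¹ 0) (Set.Icc lam B) :=
    (continuousOn_tailSum hc 0).comp (continuousOn_inv₀.mono fun x hx => by
      simp only [Set.mem_compl_singleton_iff]; linarith [hx.1]) fun x hx => by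
        have h1 : x⁻¹ < 1 := inv_lt_one_of_one_lt₀ (hlam.trans_le hx.1)
        have h0 : 0 < x⁻¹ := inv_pos.2 (by linarith [hx.1])
        exact ⟨by linarith, h1⟩
  obtain ⟨β, hβ, hβ1⟩ := intermediate_value_Icc' (hlamβ.trans hβB) hcont
    ⟨(tailSum_perturbedDigits_inv_zero_lt_one hβ₁ hβB hg (hρ' B (hlamβ.trans hβB)) hM hup).le,
      (one_lt_tailSum_perturbedDigits_inv_zero hlam hlamβ hM hlow).le⟩
  have hβ1' : 1 < β := hlam.trans_le hβ.1
  refine ⟨β, hβ, greedyDigit_eq_of_tailSum hβ1' hc hβ1 ?_⟩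
  exact tailSum_lt_one_of_toLex_lt hc (inv_pos.2 (by linarith)) (inv_lt_one_of_one_lt₀ hβ1') hβ1
    (fun k hk hkM => toLex_perturbedDigits_shift_lt hβ₁ hM hk hkM)
    (fun k hk => tailSum_perturbedDigits_inv_lt_one hβ₁.le hg hβ1' (hρ' β hβ.1) hk)

end Perturbation

lemma eq_of_sum_mul_inv_pow_eq_one (d : ℕ → ℕ) (L : ℕ) {x y : ℝ} (hx : 0 < x) (hy : 0 < y)
    (hx1 : ∑ n ∈ range L, (d n : ℝ) * x⁻¹ ^ (n + 1) = 1)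
    (hy1 : ∑ n ∈ range L, (d n : ℝ) * y⁻¹ ^ (n + 1) = 1) : x = y := by
  have key : ∀ a b : ℝ, 0 < a → 0 < b → ∑ n ∈ range L, (d n : ℝ) * a⁻¹ ^ (n + 1) = 1 →
      ∑ n ∈ range L, (d n : ℝ) * b⁻¹ ^ (n + 1) = 1 → b ≤ a := by
    intro a b ha hb ha1 hb1
    by_contra! hab
    have h := mul_sum_le_sum_mul_pow d L ((one_le_div ha).2 hab.le) (inv_nonneg.2 hb.le)
    rw [show b / a * b⁻¹ = a⁻¹ by field_simp, ha1, hb1, mul_one, div_le_one ha] at h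
    linarith
  exact le_antisymm (key y x hy hx hy1 hx1) (key x y hx hy hx1 hy1)

lemma countable_setOf_greedyDigit_eventually_zero :
    {β : ℝ | 1 < β ∧ ∃ n₀, ∀ n ≥ n₀, greedyDigit β n = 0}.Countable := by
  have hsub : {β : ℝ | 1 < β ∧ ∃ n₀, ∀ n ≥ n₀, greedyDigit β n = 0}
      ⊆ ⋃ n₀, {β : ℝ | 1 < β ∧ ∀ n ≥ n₀, greedyDigit β n = 0} := by
    rintro β ⟨hβ, n₀, h⟩
    exact Set.mem_iUnion.2 ⟨n₀, hβ, h⟩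
  refine .mono hsub (Set.countable_iUnion fun n₀ => ?_)
  have hone : ∀ β ∈ {β : ℝ | 1 < β ∧ ∀ n ≥ n₀, greedyDigit β n = 0},
      ∑ n ∈ range n₀, (greedyDigit β n : ℝ) * β⁻¹ ^ (n + 1) = 1 := by
    rintro β ⟨hβ, h⟩
    rw [sum_greedyDigit_mul_inv_pow (by linarith), tau_iterate_eq_zero_of_greedyDigit_eq_zero hβ h,
      zero_mul, sub_zero]
  refine (Set.mapsTo_univ (fun β (i : Fin n₀) => greedyDigit β i) _).countable_of_injOn
    (fun β hβ β' hβ' h => ?_) Set.countable_univ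
  have heq : ∀ n ∈ range n₀, greedyDigit β n = greedyDigit β' n := fun n hn =>
    congr_fun h ⟨n, mem_range.1 hn⟩
  refine eq_of_sum_mul_inv_pow_eq_one (greedyDigit β) n₀ (by linarith [hβ.1])
    (by linarith [hβ'.1]) (hone β hβ) ?_
  rw [← hone β' hβ']
  exact sum_congr rfl fun n hn => by rw [heq n hn]

theorem mem_closure_of_greedyDigit_frequently_ne_zero {β₁ : ℝ} (hβ₁ : 1 < β₁)
    (hfreq : ∀ n₀, ∃ n ≥ n₀, greedyDigit β₁ n ≠ 0) :
    β₁ ∈ closure {β : ℝ | 1 < β ∧ {t : ℝ | -β < t ∧ t < 0 ∧ phi β (t : ℂ) = 1}.Infinite} := by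
  rw [Metric.mem_closure_iff]
  intro ε hε
  set δ := min (ε / 2) ((β₁ - 1) / 2)
  have hδ : 0 < δ := lt_min (by linarith) (by linarith)
  have hlam : 1 < β₁ - δ := by linarith [min_le_right (ε / 2) ((β₁ - 1) / 2)]
  have hinv : 0 < (β₁ - δ)⁻¹ := by positivity
  obtain ⟨g₀, hg₀⟩ := exists_pow_lt_of_lt_one (sub_pos.2 (inv_lt_one_of_one_lt₀ hlam))
    (inv_lt_one_of_one_lt₀ hlam)
  have hρ : (β₁ - δ)⁻¹ + (β₁ - δ)⁻¹ ^ (2 * g₀ + 2) < 1 := by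
    linarith [pow_le_pow_of_le_one hinv.le (inv_lt_one_of_one_lt₀ hlam).le
      (show g₀ ≤ 2 * g₀ + 2 by omega)]
  have hη : 0 < min ((1 - (β₁ - δ) / β₁) / 2) (1 - β₁ / (β₁ + δ)) := by
    refine lt_min (half_pos (sub_pos.2 ((div_lt_one (by linarith)).2 (by linarith))))
      (sub_pos.2 ((div_lt_one (by linarith)).2 (by linarith)))
  obtain ⟨M₀, hM₀⟩ := exists_pow_lt_of_lt_one hη (inv_lt_one_of_one_lt₀ hβ₁)
  obtain ⟨M, hMM₀, hM⟩ := hfreq M₀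
  have hpow : β₁⁻¹ ^ (M + 1) < min ((1 - (β₁ - δ) / β₁) / 2) (1 - β₁ / (β₁ + δ)) :=
    (pow_le_pow_of_le_one (by positivity) (inv_lt_one_of_one_lt₀ hβ₁).le (by omega)).trans_lt hM₀
  have hlow : 2 * β₁⁻¹ ^ (M + 1) < 1 - (β₁ - δ) / β₁ := by
    linarith [hpow.trans_le (min_le_left _ _)]
  obtain ⟨β, hβ, hdig⟩ := exists_greedyDigit_eq_perturbedDigits (B := β₁ + δ) hlam (by linarith)
    (by linarith) (by omega : 2 * g₀ + 2 ≠ 0) hρ hM hlow (hpow.trans_le (min_le_right _ _))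
  refine ⟨β, ⟨hlam.trans_le hβ.1, infinite_setOf_phi_eq_one (by linarith [hβ.1])
    (fun n _ => update_greedyDigit_le (by linarith) M n) ((Nat.one_le_floor_iff _).2 hβ₁.le)
    (by omega) ⟨g₀ + 1, by ring⟩ hdig⟩, ?_⟩
  rw [Real.dist_eq, abs_lt]
  constructor <;> linarith [hβ.1, hβ.2, min_le_left (ε / 2) ((β₁ - 1) / 2)]

theorem stmt7 :
    Set.Ioi (1 : ℝ) ⊆ closure {β : ℝ | 1 < β ∧
      {t : ℝ | -β < t ∧ t < 0 ∧ phi β (t : ℂ) = 1}.Infinite} := by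
  have hdense := countable_setOf_greedyDigit_eventually_zero.dense_compl ℝ
  refine (hdense.open_subset_closure_inter isOpen_Ioi).trans (closure_minimal ?_ isClosed_closure)
  rintro β₁ ⟨hβ₁, hfin⟩
  refine mem_closure_of_greedyDigit_frequently_ne_zero hβ₁ fun n₀ => ?_
  by_contra! h
  exact hfin ⟨hβ₁, n₀, h⟩
end

section
/- Let β > 1 and let z ∈ ℂ with |z| < β. Then φ̂_β(z) = 1 if and only if φ_β(z) = 1; that is, the zeros of 1 − φ̂_β and of 1 − φ_β in the disk {|z| < β} coincide. -/
open scoped BigOperators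

/-!
If `β` is not simple the two digit sequences coincide. If `β` is simple with `L = L(1)`, then
`τ_β^L(1) = 0`, so in the variable `w = z/β` the series `φ_β` is the polynomial
`Σ_{n ≤ L} a_n wⁿ`, while the quasi-greedy digits are `L`-periodic with first block
`a_1, …, a_{L-1}, a_L - 1`. Summing the periodic series gives
`(1 - φ̂_β(z)) (1 - w^L) = 1 - φ_β(z)`, and `w^L ≠ 1` because `‖w‖ < 1`.
-/

section PowerSeries

variable {𝕜 : Type*} [NormedField 𝕜]

lemma summable_mul_pow_succ_of_norm_le [CompleteSpace 𝕜] {c : ℕ → 𝕜} {C : ℝ}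
    (hc : ∀ n, ‖c n‖ ≤ C) {w : 𝕜} (hw : ‖w‖ < 1) :
    Summable fun n => c n * w ^ (n + 1) := by
  refine Summable.of_norm_bounded (g := fun n => C * ‖w‖ ^ (n + 1)) ?_ fun n => ?_
  · exact ((summable_nat_add_iff 1).2 (summable_geometric_of_lt_one (norm_nonneg w) hw)).mul_left C
  · rw [norm_mul, norm_pow]
    exact mul_le_mul_of_nonneg_right (hc n) (by positivity)

lemma tsum_mul_pow_succ_of_periodic {c : ℕ → 𝕜} {w : 𝕜} {L : ℕ} (hc : ∀ n, c (n + L) = c n)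
    (hs : Summable fun n => c n * w ^ (n + 1)) :
    ∑' n, c n * w ^ (n + 1) =
      ∑ n ∈ Finset.range L, c n * w ^ (n + 1) + w ^ L * ∑' n, c n * w ^ (n + 1) := by
  conv_lhs => rw [← hs.sum_add_tsum_nat_add L]
  rw [← tsum_mul_left]
  exact congrArg _ (tsum_congr fun n => by rw [hc]; ring)

end PowerSeries

section BetaExpansion

variable {β : ℝ}

lemma norm_div_lt_one (hβ : 0 < β) {z : ℂ} (hz : ‖z‖ < β) : ‖z / β‖ < 1 := by
  rwa [norm_div, Complex.norm_of_nonneg hβ.le, div_lt_one hβ]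

lemma tau_mem_Ico (β x : ℝ) : tau β x ∈ Set.Ico 0 1 :=
  ⟨Int.fract_nonneg _, Int.fract_lt_one _⟩

lemma tau_iterate_mem_Icc (β : ℝ) {x : ℝ} (hx : x ∈ Set.Icc 0 1) (n : ℕ) :
    (tau β)^[n] x ∈ Set.Icc 0 1 := by
  cases n with
  | zero => exact hx
  | succ n => rw [Function.iterate_succ_apply']; exact Set.Ico_subset_Icc_self (tau_mem_Ico _ _)

lemma dig_nonneg (hβ : 0 ≤ β) {x : ℝ} (hx : x ∈ Set.Icc 0 1) (n : ℕ) : 0 ≤ dig β x n :=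
  Int.floor_nonneg.2 (mul_nonneg hβ (tau_iterate_mem_Icc β hx _).1)

lemma dig_le (hβ : 0 ≤ β) {x : ℝ} (hx : x ∈ Set.Icc 0 1) (n : ℕ) : (dig β x n : ℝ) ≤ β :=
  (Int.floor_le _).trans (mul_le_of_le_one_right hβ (tau_iterate_mem_Icc β hx _).2)

lemma abs_qdig_le (hβ : 1 ≤ β) (n : ℕ) : |(qdig β n : ℝ)| ≤ β := by
  have h1 : (1 : ℝ) ∈ Set.Icc 0 1 := ⟨zero_le_one, le_rfl⟩
  have hnonneg (m : ℕ) : (0 : ℝ) ≤ dig β 1 m := mod_cast dig_nonneg (by linarith) h1 m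
  have hle (m : ℕ) : (dig β 1 m : ℝ) ≤ β := dig_le (by linarith) h1 m
  unfold qdig
  split_ifs <;> push_cast <;> refine abs_le.2 ⟨?_, ?_⟩ <;>
    linarith [hnonneg (Lpt β 1), hle (Lpt β 1), hnonneg ((n - 1) % Lpt β 1 + 1),
      hle ((n - 1) % Lpt β 1 + 1), hnonneg n, hle n]

lemma phiHat_eq_phi_of_not_isSimpleBeta (hs : ¬IsSimpleBeta β) (z : ℂ) :
    phiHat β z = phi β z :=
  tsum_congr fun n => by simp [qdig, hs]

lemma one_le_Lpt (hs : IsSimpleBeta β) : 1 ≤ Lpt β 1 :=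
  (Nat.sInf_mem hs).1

lemma exists_tau_iterate_pred_Lpt_eq (hs : IsSimpleBeta β) :
    ∃ k : ℕ, (tau β)^[Lpt β 1 - 1] 1 = k / β :=
  let ⟨_, k, _, _, hk⟩ := Nat.sInf_mem hs
  ⟨k, hk⟩

lemma tau_iterate_one_eq_zero (hβ : β ≠ 0) (hs : IsSimpleBeta β) {n : ℕ} (hn : Lpt β 1 ≤ n) :
    (tau β)^[n] 1 = 0 := by
  obtain ⟨k, hk⟩ := exists_tau_iterate_pred_Lpt_eq hs
  have hLzero : (tau β)^[Lpt β 1] 1 = 0 := by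
    rw [← Nat.sub_add_cancel (one_le_Lpt hs), Function.iterate_succ_apply', hk, tau,
      mul_div_cancel₀ _ hβ, Int.floor_natCast, Int.cast_natCast, sub_self]
  rw [← Nat.sub_add_cancel hn, Function.iterate_add_apply, hLzero]
  exact Function.iterate_fixed (by simp [tau]) _

lemma phi_eq_sum_range_Lpt (hβ : β ≠ 0) (hs : IsSimpleBeta β) (z : ℂ) :
    phi β z = ∑ n ∈ Finset.range (Lpt β 1), (dig β 1 (n + 1) : ℂ) * (z / β) ^ (n + 1) := by
  refine tsum_eq_sum fun n hn => ?_
  have hn : Lpt β 1 ≤ n := not_lt.1 (Finset.mem_range.not.1 hn)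
  simp [dig, tau_iterate_one_eq_zero hβ hs hn]

lemma qdig_add_Lpt (hs : IsSimpleBeta β) (n : ℕ) : qdig β (n + Lpt β 1 + 1) = qdig β (n + 1) := by
  simp only [qdig, hs, if_true, Nat.add_sub_cancel, Nat.add_mod_right]

lemma qdig_succ_of_lt_Lpt (hs : IsSimpleBeta β) {n : ℕ} (hn : n < Lpt β 1) :
    qdig β (n + 1) = dig β 1 (n + 1) - if n = Lpt β 1 - 1 then 1 else 0 := by
  simp only [qdig, hs, if_true, Nat.add_sub_cancel, Nat.mod_eq_of_lt hn]
  split_ifs with h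
  · rw [h, Nat.sub_add_cancel (by omega)]
  · rw [sub_zero]

lemma one_sub_phiHat_mul (hβ : 1 < β) (hs : IsSimpleBeta β) {z : ℂ} (hz : ‖z‖ < β) :
    (1 - phiHat β z) * (1 - (z / β) ^ Lpt β 1) = 1 - phi β z := by
  have hβ0 : (0 : ℝ) < β := by linarith
  have hsum : Summable fun n => (qdig β (n + 1) : ℂ) * (z / β) ^ (n + 1) :=
    summable_mul_pow_succ_of_norm_le (C := β)
      (fun n => by simpa [Complex.norm_intCast] using abs_qdig_le hβ.le (n + 1))
      (norm_div_lt_one hβ0 hz)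
  have hperiodic := tsum_mul_pow_succ_of_periodic (L := Lpt β 1)
    (fun n => by rw [qdig_add_Lpt hs]) hsum
  have hpow : (z / β) ^ Lpt β 1 = ∑ n ∈ Finset.range (Lpt β 1),
      if n = Lpt β 1 - 1 then (z / β) ^ (n + 1) else 0 := by
    have hL := one_le_Lpt hs
    rw [Finset.sum_ite_eq', if_pos (Finset.mem_range.2 (by omega)), Nat.sub_add_cancel hL]
  have hblock : ∑ n ∈ Finset.range (Lpt β 1), (qdig β (n + 1) : ℂ) * (z / β) ^ (n + 1) =
      phi β z - (z / β) ^ Lpt β 1 := by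
    rw [phi_eq_sum_range_Lpt hβ0.ne' hs, hpow, ← Finset.sum_sub_distrib]
    refine Finset.sum_congr rfl fun n hn => ?_
    rw [qdig_succ_of_lt_Lpt hs (Finset.mem_range.1 hn)]
    split_ifs <;> push_cast <;> ring
  rw [hblock] at hperiodic
  unfold phiHat
  linear_combination -hperiodic

lemma div_pow_Lpt_ne_one (hβ : 0 < β) (hs : IsSimpleBeta β) {z : ℂ} (hz : ‖z‖ < β) :
    (z / β) ^ Lpt β 1 ≠ 1 := fun h => by
  have hlt := pow_lt_one₀ (norm_nonneg _) (norm_div_lt_one hβ hz)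
    (Nat.one_le_iff_ne_zero.1 (one_le_Lpt hs))
  rw [← norm_pow, h, norm_one] at hlt
  exact lt_irrefl _ hlt

end BetaExpansion

theorem stmt9 (β : ℝ) (hβ : 1 < β) (z : ℂ) (hz : ‖z‖ < β) :
    phiHat β z = 1 ↔ phi β z = 1 := by
  by_cases hs : IsSimpleBeta β
  · have hwL : 1 - (z / β) ^ Lpt β 1 ≠ 0 :=
      sub_ne_zero.2 (div_pow_Lpt_ne_one (by linarith) hs hz).symm
    calc phiHat β z = 1 ↔ 1 - phiHat β z = 0 := by rw [sub_eq_zero, eq_comm]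
      _ ↔ 1 - phi β z = 0 := by rw [← one_sub_phiHat_mul hβ hs hz, mul_eq_zero, or_iff_left hwL]
      _ ↔ phi β z = 1 := by rw [sub_eq_zero, eq_comm]
  · rw [phiHat_eq_phi_of_not_isSimpleBeta hs]
end

section
/- Let β > 1 and let λ ∈ ℂ with 1/β < |λ| ≤ 1. Then the function F_λ : [0,1] → ℂ, F_λ(x) = Σ_{n=1}^∞ a_n(β,x)/(βλ)^n, is right-continuous at every point x ∈ [0,1): F_λ(y) → F_λ(x) as y → x with y > x. -/
open scoped BigOperators

/-!
The floor function is locally constant from the right, and multiplication by `β > 0` preserves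
right neighbourhoods; hence `τ_β`, and with it every iterate `τ_β^n`, maps right neighbourhoods of
`x` into right neighbourhoods of `τ_β^n x`, so each digit `a_n(β, ·)` is constant on some interval
`[x, x + δ)`. Since the digits of points of `[0, 1]` lie in `[0, β]`, the terms of `F_λ` are
dominated by the summable sequence `β |βλ|^{-n}`, and dominated convergence for series concludes.
-/

open Filter Topology Set

lemma tendsto_const_mul_nhdsGE {β : ℝ} (hβ : 0 ≤ β) (x : ℝ) :
    Tendsto (β * ·) (𝓝[≥] x) (𝓝[≥] (β * x)) :=
  tendsto_nhdsWithin_of_tendsto_nhds_of_eventually_within _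
    (continuous_const_mul β).continuousWithinAt
    (eventually_nhdsWithin_of_forall fun _ hy => mul_le_mul_of_nonneg_left hy hβ)

lemma eventually_floor_const_mul_eq {β : ℝ} (hβ : 0 ≤ β) (x : ℝ) :
    ∀ᶠ y in 𝓝[≥] x, ⌊β * y⌋ = ⌊β * x⌋ :=
  tendsto_pure.1 <| (tendsto_floor_right_pure_floor _).comp (tendsto_const_mul_nhdsGE hβ x)

lemma tendsto_tau_nhdsGE {β : ℝ} (hβ : 0 ≤ β) (x : ℝ) :
    Tendsto (tau β) (𝓝[≥] x) (𝓝[≥] (tau β x)) := by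
  have heq : (fun y => β * y - ⌊β * x⌋) =ᶠ[𝓝[≥] x] tau β :=
    (eventually_floor_const_mul_eq hβ x).mono fun y hy => by rw [tau, hy]
  refine tendsto_nhdsWithin_iff.2 ⟨?_, ?_⟩
  · exact ((continuous_const_mul β).sub continuous_const).continuousWithinAt.congr' heq
  · filter_upwards [heq, self_mem_nhdsWithin] with y hy hxy
    rw [← hy, mem_Ici, tau]
    gcongr
    exact hxy

lemma tendsto_iterate_tau_nhdsGE {β : ℝ} (hβ : 0 ≤ β) (x : ℝ) (n : ℕ) :
    Tendsto (tau β)^[n] (𝓝[≥] x) (𝓝[≥] ((tau β)^[n] x)) := by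
  induction n with
  | zero => exact tendsto_id
  | succ n ih =>
    rw [Function.iterate_succ', Function.comp_apply]
    exact (tendsto_tau_nhdsGE hβ _).comp ih

lemma eventually_dig_eq {β : ℝ} (hβ : 0 ≤ β) (x : ℝ) (n : ℕ) :
    ∀ᶠ y in 𝓝[≥] x, dig β y n = dig β x n :=
  (tendsto_iterate_tau_nhdsGE hβ x (n - 1)).eventually (eventually_floor_const_mul_eq hβ _)

lemma mapsTo_tau_Icc (β : ℝ) : MapsTo (tau β) (Icc 0 1) (Icc 0 1) :=
  fun _ _ => ⟨Int.fract_nonneg _, (Int.fract_lt_one _).le⟩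

lemma abs_dig_le {β y : ℝ} (hβ : 0 ≤ β) (hy : y ∈ Icc 0 1) (n : ℕ) : |(dig β y n : ℝ)| ≤ β := by
  obtain ⟨h0, h1⟩ := (mapsTo_tau_Icc β).iterate (n - 1) hy
  rw [dig, abs_of_nonneg (by exact_mod_cast Int.floor_nonneg.2 (mul_nonneg hβ h0))]
  exact (Int.floor_le _).trans (mul_le_of_le_one_right hβ h1)

lemma tendsto_Ffun_of_eventually_dig_eq {l : Filter ℝ} {β : ℝ} {lam : ℂ} {x : ℝ} (hβ : 0 ≤ β)
    (hβlam : 1 < ‖(β : ℂ) * lam‖) (hdig : ∀ n, ∀ᶠ y in l, dig β y n = dig β x n)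
    (hl : ∀ᶠ y in l, y ∈ Icc 0 1) :
    Tendsto (Ffun β lam) l (𝓝 (Ffun β lam x)) := by
  have hsum : Summable fun n : ℕ => β * ‖(β : ℂ) * lam‖⁻¹ ^ (n + 1) :=
    ((summable_geometric_of_lt_one (inv_nonneg.2 (norm_nonneg _))
      (inv_lt_one_of_one_lt₀ hβlam)).mul_left β).comp_injective (add_left_injective 1)
  refine tendsto_tsum_of_dominated_convergence hsum
    (fun n => tendsto_const_nhds.congr' ((hdig (n + 1)).mono fun y hy => by simp only [hy])) ?_
  filter_upwards [hl] with y hy n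
  rw [norm_div, norm_pow, Complex.norm_intCast, div_eq_mul_inv, ← inv_pow]
  gcongr
  exact abs_dig_le hβ hy _

theorem stmt14_general (β : ℝ) (hβ : 1 < β) (lam : ℂ)
    (h1 : 1 / β < ‖lam‖)
    (x : ℝ) (hx : x ∈ Set.Ico (0 : ℝ) 1) :
    Filter.Tendsto (Ffun β lam) (nhdsWithin x (Set.Ioc x 1)) (nhds (Ffun β lam x)) := by
  have hβ0 : 0 ≤ β := by linarith
  have hβlam : 1 < ‖(β : ℂ) * lam‖ := by
    rwa [norm_mul, Complex.norm_real, Real.norm_of_nonneg hβ0, ← div_lt_iff₀' (by linarith)]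
  have hle : 𝓝[Ioc x 1] x ≤ 𝓝[≥] x := nhdsWithin_mono x fun _ hy => le_of_lt hy.1
  exact tendsto_Ffun_of_eventually_dig_eq hβ0 hβlam (fun n => hle (eventually_dig_eq hβ0 x n))
    (eventually_nhdsWithin_of_forall fun y hy => ⟨hx.1.trans hy.1.le, hy.2⟩)

theorem stmt14 (β : ℝ) (hβ : 1 < β) (lam : ℂ)
    (h1 : 1 / β < ‖lam‖) (h2 : ‖lam‖ ≤ 1)
    (x : ℝ) (hx : x ∈ Set.Ico (0 : ℝ) 1) :
    Filter.Tendsto (Ffun β lam) (nhdsWithin x (Set.Ioc x 1)) (nhds (Ffun β lam x)) :=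
  stmt14_general β hβ lam h1 x hx
end
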